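/- arXiv:1611.06630 — 4 statements merged into one kernel-verified Lean document; each statement's English description precedes it below -/
import Mathlib

section
/- For all positive integers q and n, Σ_{d | n} c_q(d)·μ(n/d) equals n·μ(q/n) if n divides q, and 0 otherwise. -/
/-
Splitting the divisors of `gcd q m` as the divisors of `m` that divide `q` exhibits `c_q` as the
divisor sum of `d ↦ [d ∣ q] d μ(q/d)`; Möbius inversion recovers that function.
-/

open Finset

/-- The Ramanujan sum. -/
noncomputable def ramanujanSum (q n : ℕ) : ℤ :=
  ∑ d ∈ (Nat.gcd q n).divisors, ArithmeticFunction.moebius (q / d) * d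

open ArithmeticFunction
open scoped ArithmeticFunction.Moebius

theorem Nat.divisors_gcd_eq_filter_dvd (a : ℕ) {b : ℕ} (hb : b ≠ 0) :
    (a.gcd b).divisors = {d ∈ b.divisors | d ∣ a} := by
  ext d
  simp only [Nat.mem_divisors, mem_filter, Nat.dvd_gcd_iff, ne_eq, Nat.gcd_eq_zero_iff, hb,
    and_false, not_false_eq_true, and_true]
  tauto

theorem sum_divisors_mul_moebius_div_eq {R : Type*} [CommRing R] {f g : ℕ → R}
    (h : ∀ m > 0, ∑ d ∈ m.divisors, f d = g m) {n : ℕ} (hn : 0 < n) :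
    ∑ d ∈ n.divisors, g d * μ (n / d) = f n := by
  rw [← sum_eq_iff_sum_mul_moebius_eq.mp h n hn,
    Nat.sum_divisorsAntidiagonal' fun a b => (μ a : R) * g b]
  exact sum_congr rfl fun d _ => mul_comm _ _

theorem ramanujanSum_eq_sum_divisors (q : ℕ) {m : ℕ} (hm : m ≠ 0) :
    ramanujanSum q m = ∑ d ∈ m.divisors, if d ∣ q then (d : ℤ) * μ (q / d) else 0 := by
  rw [ramanujanSum, ← sum_filter, Nat.divisors_gcd_eq_filter_dvd q hm]
  exact sum_congr rfl fun d _ => mul_comm _ _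

theorem ramanujanSum_mul_moebius_general (q n : ℕ) (hn : 0 < n) :
    ∑ d ∈ n.divisors, ramanujanSum q d * ArithmeticFunction.moebius (n / d) =
      if n ∣ q then (n : ℤ) * ArithmeticFunction.moebius (q / n) else 0 :=
  sum_divisors_mul_moebius_div_eq (fun _ hm => (ramanujanSum_eq_sum_divisors q hm.ne').symm) hn

theorem ramanujanSum_mul_moebius (q n : ℕ) (hq : 0 < q) (hn : 0 < n) :
    ∑ d ∈ n.divisors, ramanujanSum q d * ArithmeticFunction.moebius (n / d) =
      if n ∣ q then (n : ℤ) * ArithmeticFunction.moebius (q / n) else 0 :=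
  ramanujanSum_mul_moebius_general q n hn
end

section
/- Let a : ℕ → ℂ be an arithmetic function such that for every positive integer q, the series A(q) := q·Σ_{k=1}^∞ a(kq) converges. Then for every positive integer q, the series Σ_{n=1}^∞ a(n)·c_q(n) converges and equals (A*μ)(q) = Σ_{d|q} μ(q/d)·A(d). -/
/-!
Since `c_q(n) = ∑_{d ∣ q, d ∣ n} μ(q/d) d`, interchanging the two finite sums turns the partial
sum `∑_{n ≤ x} a(n) c_q(n)` into `∑_{d ∣ q} μ(q/d) · d ∑_{k ≤ x/d} a(kd)`. As `x → ∞` also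
`x / d → ∞`, so each of the finitely many inner terms tends to `μ(q/d) A(d)`.
-/

open Finset Filter Topology

open ArithmeticFunction (moebius)

lemma Nat.divisors_gcd_eq_filter_dvd_s5 {q : ℕ} (hq : q ≠ 0) (n : ℕ) :
    (q.gcd n).divisors = {d ∈ q.divisors | d ∣ n} := by
  ext d
  simp [Nat.dvd_gcd_iff, hq]

lemma ramanujanSum_eq_sum_divisors_filter_dvd {q : ℕ} (hq : q ≠ 0) (n : ℕ) :
    ramanujanSum q n = ∑ d ∈ q.divisors with d ∣ n, moebius (q / d) * d := by
  rw [ramanujanSum, Nat.divisors_gcd_eq_filter_dvd_s5 hq]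

lemma sum_Icc_filter_dvd_eq_sum_Icc_div {M : Type*} [AddCommMonoid M] (f : ℕ → M) {d : ℕ}
    (hd : d ≠ 0) (x : ℕ) :
    ∑ n ∈ Icc 1 x with d ∣ n, f n = ∑ k ∈ Icc 1 (x / d), f (k * d) := by
  have hd_pos : 0 < d := Nat.pos_of_ne_zero hd
  symm
  refine sum_nbij' (· * d) (· / d) (fun k hk => ?_) (fun n hn => ?_)
    (fun k _ => Nat.mul_div_cancel k hd_pos) (fun n hn => Nat.div_mul_cancel (mem_filter.1 hn).2)
    fun _ _ => rfl
  · rw [mem_Icc] at hk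
    refine mem_filter.2 ⟨mem_Icc.2 ⟨Nat.mul_pos hk.1 hd_pos, ?_⟩, dvd_mul_left d k⟩
    exact (Nat.le_div_iff_mul_le hd_pos).1 hk.2
  · obtain ⟨hn, hdn⟩ := mem_filter.1 hn
    rw [mem_Icc] at hn ⊢
    exact ⟨(Nat.one_le_div_iff hd_pos).2 (Nat.le_of_dvd hn.1 hdn), Nat.div_le_div_right hn.2⟩

theorem sum_Icc_mul_ramanujanSum {R : Type*} [CommRing R] (a : ℕ → R) {q : ℕ} (hq : q ≠ 0)
    (x : ℕ) :
    ∑ n ∈ Icc 1 x, a n * ramanujanSum q n =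
      ∑ d ∈ q.divisors, (moebius (q / d) : R) * (d * ∑ k ∈ Icc 1 (x / d), a (k * d)) := by
  calc ∑ n ∈ Icc 1 x, a n * ramanujanSum q n
      = ∑ d ∈ q.divisors, ∑ n ∈ Icc 1 x with d ∣ n, (moebius (q / d) : R) * (d * a n) := by
        simp_rw [ramanujanSum_eq_sum_divisors_filter_dvd hq, Int.cast_sum, Int.cast_mul,
          Int.cast_natCast, mul_sum, sum_filter]
        rw [sum_comm]
        refine sum_congr rfl fun d _ => sum_congr rfl fun n _ => ?_
        split_ifs <;> ring
    _ = _ := by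
        refine sum_congr rfl fun d hd => ?_
        rw [sum_Icc_filter_dvd_eq_sum_Icc_div _ (Nat.ne_of_gt (Nat.pos_of_mem_divisors hd)),
          mul_sum, mul_sum]

theorem dual_lucht (a A : ℕ → ℂ)
    (hA : ∀ q : ℕ, 0 < q →
      Tendsto (fun x : ℕ => (q : ℂ) * ∑ k ∈ Finset.Icc 1 x, a (k * q)) atTop (𝓝 (A q)))
    (q : ℕ) (hq : 0 < q) :
    Tendsto (fun x : ℕ => ∑ n ∈ Finset.Icc 1 x, a n * (ramanujanSum q n : ℂ)) atTop
      (𝓝 (∑ d ∈ q.divisors, (ArithmeticFunction.moebius (q / d) : ℂ) * A d)) := by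
  simp_rw [sum_Icc_mul_ramanujanSum a hq.ne']
  refine tendsto_finsetSum _ fun d hdq => ?_
  have hd : 0 < d := Nat.pos_of_mem_divisors hdq
  exact ((hA d hd).comp (Nat.tendsto_div_const_atTop hd.ne')).const_mul _
end

section
/- For real s > 1 and every positive integer q, Σ_{n=1}^∞ μ(n)·c_q(n)/n^s = (1/ζ(s))·((id·μ/φ_s) * μ)(q), where φ_s(q) = q^s·Π_{p|q}(1 − 1/p^s). -/
/-!
Expanding `c_q(n) = ∑_{d ∣ (q, n)} μ(q/d) d` turns the series into
`∑_{d ∣ q} d μ(q/d) ∑_{d ∣ n} μ(n) n^{-s}`. Writing `n = d k`, multiplicativity of `μ` gives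
`∑_{d ∣ n} μ(n) n^{-s} = μ(d) d^{-s} ∑_{(k, d) = 1} μ(k) k^{-s}`, and for squarefree `d` the
restricted series is `1/ζ(s)` with the Euler factors `1 - p^{-s}`, `p ∣ d`, divided out: splitting
off the multiples of one prime `p ∤ d` at a time multiplies it by `1 - p^{-s}`.
-/

open Finset Filter Topology

/-- `φ_s(q) = q^s ∏_{p ∣ q} (1 - p^{-s})`. -/
noncomputable def phiS (s : ℝ) (q : ℕ) : ℝ :=
  (q : ℝ) ^ s * ∏ p ∈ q.primeFactors, (1 - 1 / (p : ℝ) ^ s)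

open ArithmeticFunction

theorem HasSum.tendsto_sum_Icc_one {M : Type*} [AddCommMonoid M] [TopologicalSpace M]
    {f : ℕ → M} {a : M} (h : HasSum f a) (h0 : f 0 = 0) :
    Tendsto (fun x => ∑ n ∈ Icc 1 x, f n) atTop (𝓝 a) := by
  refine (h.tendsto_sum_nat.comp (tendsto_add_atTop_nat 1)).congr fun x => ?_
  rw [Function.comp_apply, sum_range_eq_add_Ico f x.succ_pos, h0, _root_.zero_add]
  rfl

theorem hasSum_ite_dvd_iff {M : Type*} [AddCommMonoid M] [TopologicalSpace M]
    {f : ℕ → M} {a : M} {d : ℕ} (hd : d ≠ 0) :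
    HasSum (fun n => if d ∣ n then f n else 0) a ↔ HasSum (fun k => f (d * k)) a := by
  rw [← (mul_right_injective₀ hd).hasSum_iff]
  · simp [Function.comp_def]
  · rintro n hn
    simp only [Set.mem_range, not_exists] at hn
    exact if_neg fun ⟨k, hk⟩ => hn k hk.symm

theorem ramanujanSum_eq_sum_divisors_filter (q n : ℕ) :
    ramanujanSum q n = ∑ d ∈ q.divisors.filter (· ∣ n), moebius (q / d) * d := by
  rcases eq_or_ne q 0 with rfl | hq
  · simp [ramanujanSum]
  unfold ramanujanSum
  congr 1
  ext d
  simp [Nat.dvd_gcd_iff, hq]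

-- `s ≠ 0` makes the real `n = 0` term `f 0 / 0 ^ s` vanish, as the `L`-series omits it.
theorem ofReal_tsum_div_rpow_eq_LSeries (f : ℕ → ℝ) {s : ℝ} (hs : s ≠ 0) :
    ((∑' n : ℕ, f n / (n : ℝ) ^ s : ℝ) : ℂ) = LSeries (fun n => (f n : ℂ)) s := by
  rw [Complex.ofReal_tsum]
  refine tsum_congr fun n => ?_
  rcases eq_or_ne n 0 with rfl | hn
  · simp [Real.zero_rpow hs]
  · rw [LSeries.term_of_ne_zero hn, Complex.ofReal_div, Complex.ofReal_cpow n.cast_nonneg]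
    norm_cast

theorem tsum_pnat_one_div_rpow_eq_tsum_nat {s : ℝ} (hs : s ≠ 0) :
    ∑' m : ℕ+, 1 / (m : ℝ) ^ s = ∑' n : ℕ, 1 / (n : ℝ) ^ s := by
  refine PNat.coe_injective.tsum_eq (f := fun n : ℕ => 1 / (n : ℝ) ^ s) fun n hn => ?_
  have : n ≠ 0 := by rintro rfl; simp [Real.zero_rpow hs] at hn
  exact ⟨⟨n, Nat.pos_of_ne_zero this⟩, rfl⟩

theorem tsum_moebius_div_rpow_mul_tsum_pnat {s : ℝ} (hs : 1 < s) :
    (∑' n : ℕ, (moebius n : ℝ) / (n : ℝ) ^ s) * ∑' m : ℕ+, 1 / (m : ℝ) ^ s = 1 := by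
  have hs0 : s ≠ 0 := by positivity
  rw [tsum_pnat_one_div_rpow_eq_tsum_nat hs0]
  apply Complex.ofReal_injective
  rw [Complex.ofReal_mul, ofReal_tsum_div_rpow_eq_LSeries _ hs0,
    ofReal_tsum_div_rpow_eq_LSeries (fun _ => 1) hs0, mul_comm, Complex.ofReal_one]
  exact LSeries_one_mul_Lseries_moebius (by simpa using hs)

noncomputable def coprimeMoebiusTerm (s : ℝ) (d m : ℕ) : ℝ :=
  if m.Coprime d then moebius m / (m : ℝ) ^ s else 0

@[simp]
theorem coprimeMoebiusTerm_one_right (s : ℝ) (m : ℕ) :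
    coprimeMoebiusTerm s 1 m = moebius m / (m : ℝ) ^ s := by
  simp [coprimeMoebiusTerm]

theorem coprimeMoebiusTerm_mul (s : ℝ) (d a k : ℕ) :
    coprimeMoebiusTerm s d (a * k) =
      coprimeMoebiusTerm s d a * coprimeMoebiusTerm s (d * a) k := by
  by_cases hak : a.Coprime k
  · have hpow : ((a * k : ℕ) : ℝ) ^ s = (a : ℝ) ^ s * (k : ℝ) ^ s := by
      push_cast; exact Real.mul_rpow a.cast_nonneg k.cast_nonneg
    have hkda : k.Coprime (d * a) ↔ k.Coprime d :=
      Nat.coprime_mul_iff_right.trans (and_iff_left hak.symm)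
    by_cases ha : a.Coprime d
    · by_cases hk : k.Coprime d
      · simp only [coprimeMoebiusTerm, if_pos (Nat.Coprime.mul_left ha hk), if_pos ha,
          if_pos (hkda.2 hk), isMultiplicative_moebius.map_mul_of_coprime hak, hpow]
        push_cast
        ring
      · simp only [coprimeMoebiusTerm, if_neg (mt hkda.1 hk), mul_zero,
          if_neg fun h => hk (Nat.coprime_mul_iff_left.1 h).2]
    · simp only [coprimeMoebiusTerm, if_neg ha, zero_mul,
        if_neg fun h => ha (Nat.coprime_mul_iff_left.1 h).1]
  · have hsq : ¬ Squarefree (a * k) := fun h => hak (Nat.coprime_of_squarefree_mul h)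
    have hk : ¬ k.Coprime (d * a) := fun h => hak (Nat.Coprime.coprime_mul_left_right h).symm
    simp [coprimeMoebiusTerm, moebius_eq_zero_of_not_squarefree hsq, hk]

section

variable {s : ℝ}

theorem summable_coprimeMoebiusTerm (hs : 1 < s) (d : ℕ) :
    Summable (coprimeMoebiusTerm s d) := by
  refine .of_norm_bounded (Real.summable_one_div_nat_rpow.mpr hs) fun m => ?_
  have hμ : |(moebius m : ℝ)| ≤ 1 := mod_cast abs_moebius_le_one
  have hpow : 0 ≤ (m : ℝ) ^ s := by positivity
  unfold coprimeMoebiusTerm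
  split_ifs
  · rw [Real.norm_eq_abs, abs_div, abs_of_nonneg hpow]
    exact div_le_div_of_nonneg_right hμ hpow
  · simpa using div_nonneg zero_le_one hpow

theorem tsum_coprimeMoebiusTerm_eq_mul_tsum (hs : 1 < s) {d p : ℕ} (hp : p.Prime)
    (hpd : ¬ p ∣ d) :
    ∑' m, coprimeMoebiusTerm s d m =
      (1 - 1 / (p : ℝ) ^ s) * ∑' m, coprimeMoebiusTerm s (d * p) m := by
  have hsplit : ∀ m, coprimeMoebiusTerm s d m =
      coprimeMoebiusTerm s (d * p) m + if p ∣ m then coprimeMoebiusTerm s d m else 0 := by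
    intro m
    by_cases hpm : p ∣ m
    · have hmdp : ¬ m.Coprime (d * p) := fun h =>
        (hp.coprime_iff_not_dvd.1 (Nat.Coprime.coprime_mul_left_right h).symm) hpm
      simp [coprimeMoebiusTerm, hpm, hmdp]
    · have hmp : m.Coprime p := (hp.coprime_iff_not_dvd.2 hpm).symm
      simp only [coprimeMoebiusTerm, if_neg hpm, add_zero, Nat.coprime_mul_iff_right,
        and_iff_left hmp]
  have hp_term : coprimeMoebiusTerm s d p = -(1 / (p : ℝ) ^ s) := by
    rw [coprimeMoebiusTerm, if_pos (hp.coprime_iff_not_dvd.2 hpd), moebius_apply_prime hp]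
    push_cast
    ring
  have hmultiples : HasSum (fun m => if p ∣ m then coprimeMoebiusTerm s d m else 0)
      (-(1 / (p : ℝ) ^ s) * ∑' m, coprimeMoebiusTerm s (d * p) m) := by
    rw [hasSum_ite_dvd_iff hp.ne_zero, ← hp_term]
    simpa only [coprimeMoebiusTerm_mul] using
      (summable_coprimeMoebiusTerm hs _).hasSum.mul_left (coprimeMoebiusTerm s d p)
  rw [tsum_congr hsplit, ((summable_coprimeMoebiusTerm hs _).hasSum.add hmultiples).tsum_eq]
  ring

theorem tsum_coprimeMoebiusTerm_one_eq_prod_mul (hs : 1 < s) {d : ℕ} (hd : Squarefree d) :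
    ∑' m, coprimeMoebiusTerm s 1 m =
      (∏ p ∈ d.primeFactors, (1 - 1 / (p : ℝ) ^ s)) * ∑' m, coprimeMoebiusTerm s d m := by
  suffices ∀ t : Finset ℕ, (∀ p ∈ t, p.Prime) → ∑' m, coprimeMoebiusTerm s 1 m =
      (∏ p ∈ t, (1 - 1 / (p : ℝ) ^ s)) * ∑' m, coprimeMoebiusTerm s (∏ p ∈ t, p) m by
    simpa [Nat.prod_primeFactors_of_squarefree hd] using
      this d.primeFactors fun p => Nat.prime_of_mem_primeFactors
  intro t ht
  induction t using Finset.induction_on with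
  | empty => simp
  | insert p t hpt ih =>
    have hp : p.Prime := ht p (mem_insert_self p t)
    have ht' : ∀ q ∈ t, q.Prime := fun q hq => ht q (mem_insert_of_mem hq)
    have hp_dvd : ¬ p ∣ ∏ q ∈ t, q := fun h => by
      obtain ⟨q, hq, hpq⟩ := hp.prime.exists_mem_finset_dvd h
      exact hpt ((Nat.prime_dvd_prime_iff_eq hp (ht' q hq)).1 hpq ▸ hq)
    rw [ih ht', tsum_coprimeMoebiusTerm_eq_mul_tsum hs hp hp_dvd, prod_insert hpt, prod_insert hpt,
      mul_comm p]
    ring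

theorem hasSum_ite_dvd_moebius_div_rpow (hs : 1 < s) {d : ℕ} (hd : d ≠ 0) :
    HasSum (fun n => if d ∣ n then (moebius n : ℝ) / (n : ℝ) ^ s else 0)
      (moebius d / phiS s d * ∑' n : ℕ, (moebius n : ℝ) / (n : ℝ) ^ s) := by
  have hmultiples : HasSum (fun n => if d ∣ n then (moebius n : ℝ) / (n : ℝ) ^ s else 0)
      (moebius d / (d : ℝ) ^ s * ∑' m, coprimeMoebiusTerm s d m) := by
    simp_rw [← coprimeMoebiusTerm_one_right s]
    rw [hasSum_ite_dvd_iff hd]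
    simpa [coprimeMoebiusTerm_mul] using
      (summable_coprimeMoebiusTerm hs d).hasSum.mul_left (coprimeMoebiusTerm s 1 d)
  convert hmultiples using 1
  by_cases hsq : Squarefree d
  · have hfactor_pos : ∀ p ∈ d.primeFactors, 0 < 1 - 1 / (p : ℝ) ^ s := fun p hp => by
      have hp1 : (1 : ℝ) < p := mod_cast (Nat.prime_of_mem_primeFactors hp).one_lt
      exact sub_pos.2 ((div_lt_one (by positivity)).2 (Real.one_lt_rpow hp1 (by linarith)))
    have hprod := (prod_pos hfactor_pos).ne'
    rw [← tsum_congr (coprimeMoebiusTerm_one_right s),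
      tsum_coprimeMoebiusTerm_one_eq_prod_mul hs hsq, phiS]
    field_simp
  · simp [moebius_eq_zero_of_not_squarefree hsq]

end

theorem dual_rf_moebius_general (s : ℝ) (hs : 1 < s) (q : ℕ) :
    Tendsto (fun x : ℕ => ∑ n ∈ Finset.Icc 1 x,
        (ArithmeticFunction.moebius n : ℝ) * (ramanujanSum q n : ℝ) / (n : ℝ) ^ s) atTop
      (𝓝 ((1 / ∑' m : ℕ+, 1 / (m : ℝ) ^ s) *
        ∑ d ∈ q.divisors, (d : ℝ) * (ArithmeticFunction.moebius d : ℝ) / phiS s d *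
          (ArithmeticFunction.moebius (q / d) : ℝ))) := by
  have hexpand : ∀ n, (moebius n : ℝ) * (ramanujanSum q n : ℝ) / (n : ℝ) ^ s =
      ∑ d ∈ q.divisors, (d * moebius (q / d) : ℝ) *
        if d ∣ n then (moebius n : ℝ) / (n : ℝ) ^ s else 0 := by
    intro n
    rw [ramanujanSum_eq_sum_divisors_filter, Int.cast_sum, mul_sum, sum_div, sum_filter]
    refine sum_congr rfl fun d _ => ?_
    split_ifs <;> push_cast <;> ring
  refine HasSum.tendsto_sum_Icc_one ?_ (by simp)
  simp_rw [hexpand, mul_sum]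
  refine hasSum_sum fun d hd => ?_
  have hvalue :
      (1 / ∑' m : ℕ+, 1 / (m : ℝ) ^ s) * ((d : ℝ) * moebius d / phiS s d * moebius (q / d)) =
        (d * moebius (q / d) : ℝ) *
          (moebius d / phiS s d * ∑' n : ℕ, (moebius n : ℝ) / (n : ℝ) ^ s) := by
    rw [← eq_one_div_of_mul_eq_one_left (tsum_moebius_div_rpow_mul_tsum_pnat hs)]
    ring
  rw [hvalue]
  exact (hasSum_ite_dvd_moebius_div_rpow hs (Nat.pos_of_mem_divisors hd).ne').mul_left _

theorem dual_rf_moebius (s : ℝ) (hs : 1 < s) (q : ℕ) (hq : 0 < q) :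
    Tendsto (fun x : ℕ => ∑ n ∈ Finset.Icc 1 x,
        (ArithmeticFunction.moebius n : ℝ) * (ramanujanSum q n : ℝ) / (n : ℝ) ^ s) atTop
      (𝓝 ((1 / ∑' m : ℕ+, 1 / (m : ℝ) ^ s) *
        ∑ d ∈ q.divisors, (d : ℝ) * (ArithmeticFunction.moebius d : ℝ) / phiS s d *
          (ArithmeticFunction.moebius (q / d) : ℝ))) :=
  dual_rf_moebius_general s hs q
end

section
/- Σ_{n=1}^∞ φ(n)·I_{square}(n)/n² = Σ_{q=1}^∞ μ(q)²/(q·ψ(q)), where I_{square}(n) indicates n is a perfect square and ψ(q) = q·Π_{p|q}(1+1/p); equivalently Σ_{m=1}^∞ φ(m²)/m⁴ = Σ_{q=1}^∞ μ(q)²/(q·ψ(q)). -/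
/-!
Both sides sum multiplicative functions whose terms are bounded by `1 / n ^ 2`, so each equals
its Euler product. The Euler factors agree at every prime `p`: on the left,
`1 + ∑_{k ≥ 1} (1 - 1/p) p^{-2k} = 1 + 1 / (p (p + 1))`; on the right only `q = 1` and `q = p`
contribute, giving `1 + 1 / (p ψ(p)) = 1 + 1 / (p (p + 1))`.
-/

open Finset

/-- The Dedekind psi function `ψ(q) = q ∏_{p ∣ q} (1 + 1/p)`. -/
noncomputable def dedekindPsi (q : ℕ) : ℝ :=
  (q : ℝ) * ∏ p ∈ q.primeFactors, (1 + 1 / (p : ℝ))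

section EulerFactor

variable {R : Type*} [NormedCommRing R] [CompleteSpace R] {f g : ℕ → R}

theorem tsum_eq_tsum_of_eulerFactor_eq (hf₁ : f 1 = 1) (hg₁ : g 1 = 1)
    (hf : ∀ {m n}, m.Coprime n → f (m * n) = f m * f n)
    (hg : ∀ {m n}, m.Coprime n → g (m * n) = g m * g n)
    (hfs : Summable (‖f ·‖)) (hgs : Summable (‖g ·‖)) (hf₀ : f 0 = 0) (hg₀ : g 0 = 0)
    (hfg : ∀ p : ℕ, p.Prime → ∑' e, f (p ^ e) = ∑' e, g (p ^ e)) :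
    ∑' n, f n = ∑' n, g n := by
  rw [← EulerProduct.eulerProduct_tprod hf₁ hf hfs hf₀,
    ← EulerProduct.eulerProduct_tprod hg₁ hg hgs hg₀]
  exact tprod_congr fun p ↦ hfg p p.prop

end EulerFactor

theorem summable_norm_of_norm_le_one_div_sq {E : Type*} [SeminormedAddCommGroup E] {f : ℕ → E}
    (hf : ∀ n, ‖f n‖ ≤ 1 / (n : ℝ) ^ 2) :
    Summable (‖f ·‖) :=
  (Real.summable_one_div_nat_pow.mpr one_lt_two).of_norm_bounded fun n ↦ by
    rw [norm_norm]; exact hf n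

theorem dedekindPsi_mul_of_coprime {m n : ℕ} (h : m.Coprime n) :
    dedekindPsi (m * n) = dedekindPsi m * dedekindPsi n := by
  rw [dedekindPsi, dedekindPsi, dedekindPsi, h.primeFactors_mul,
    prod_union h.disjoint_primeFactors]
  push_cast
  ring

theorem dedekindPsi_prime {p : ℕ} (hp : p.Prime) : dedekindPsi p = p + 1 := by
  have : (p : ℝ) ≠ 0 := by exact_mod_cast hp.ne_zero
  rw [dedekindPsi, hp.primeFactors, prod_singleton]
  field_simp

theorem le_dedekindPsi (n : ℕ) : (n : ℝ) ≤ dedekindPsi n := by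
  refine le_mul_of_one_le_right n.cast_nonneg (one_le_prod fun p _ ↦ ?_)
  simp only [le_add_iff_nonneg_right]
  positivity

noncomputable def totientSqTerm (n : ℕ) : ℝ := (n ^ 2).totient / (n : ℝ) ^ 4

noncomputable def moebiusSqPsiTerm (n : ℕ) : ℝ :=
  (ArithmeticFunction.moebius n : ℝ) ^ 2 / (n * dedekindPsi n)

@[simp] theorem totientSqTerm_zero : totientSqTerm 0 = 0 := by simp [totientSqTerm]

@[simp] theorem totientSqTerm_one : totientSqTerm 1 = 1 := by simp [totientSqTerm]

@[simp] theorem moebiusSqPsiTerm_zero : moebiusSqPsiTerm 0 = 0 := by simp [moebiusSqPsiTerm]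

@[simp] theorem moebiusSqPsiTerm_one : moebiusSqPsiTerm 1 = 1 := by
  simp [moebiusSqPsiTerm, dedekindPsi]

theorem totientSqTerm_mul_of_coprime {m n : ℕ} (h : m.Coprime n) :
    totientSqTerm (m * n) = totientSqTerm m * totientSqTerm n := by
  rw [totientSqTerm, totientSqTerm, totientSqTerm, mul_pow, Nat.totient_mul (h.pow 2 2)]
  push_cast
  rw [mul_pow, mul_div_mul_comm]

theorem moebiusSqPsiTerm_mul_of_coprime {m n : ℕ} (h : m.Coprime n) :
    moebiusSqPsiTerm (m * n) = moebiusSqPsiTerm m * moebiusSqPsiTerm n := by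
  rw [moebiusSqPsiTerm, moebiusSqPsiTerm, moebiusSqPsiTerm, dedekindPsi_mul_of_coprime h,
    ArithmeticFunction.isMultiplicative_moebius.map_mul_of_coprime h]
  push_cast
  rw [mul_pow, mul_mul_mul_comm, mul_div_mul_comm]

theorem norm_totientSqTerm_le (n : ℕ) : ‖totientSqTerm n‖ ≤ 1 / (n : ℝ) ^ 2 := by
  obtain rfl | hn := n.eq_zero_or_pos
  · simp
  have hn : (0 : ℝ) < n := Nat.cast_pos.mpr hn
  have htot : ((n ^ 2).totient : ℝ) ≤ (n : ℝ) ^ 2 := by exact_mod_cast Nat.totient_le _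
  rw [totientSqTerm, Real.norm_of_nonneg (by positivity),
    div_le_div_iff₀ (by positivity) (by positivity)]
  nlinarith

theorem norm_moebiusSqPsiTerm_le (n : ℕ) : ‖moebiusSqPsiTerm n‖ ≤ 1 / (n : ℝ) ^ 2 := by
  obtain rfl | hn := n.eq_zero_or_pos
  · simp
  have hn : (0 : ℝ) < n := Nat.cast_pos.mpr hn
  have hψ := le_dedekindPsi n
  have hμ : (ArithmeticFunction.moebius n : ℝ) ^ 2 ≤ 1 :=
    sq_le_one_iff_abs_le_one _ |>.mpr (by exact_mod_cast ArithmeticFunction.abs_moebius_le_one)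
  have hnψ : 0 < (n : ℝ) * dedekindPsi n := mul_pos hn (hn.trans_le hψ)
  rw [moebiusSqPsiTerm, Real.norm_of_nonneg (div_nonneg (sq_nonneg _) hnψ.le),
    div_le_div_iff₀ hnψ (by positivity)]
  nlinarith

section PrimePower

variable {p : ℕ} (hp : p.Prime)
include hp

theorem totientSqTerm_prime_pow_succ (k : ℕ) :
    totientSqTerm (p ^ (k + 1)) = (1 - 1 / p) * (1 / (p : ℝ) ^ 2) * (1 / (p : ℝ) ^ 2) ^ k := by
  have : (p : ℝ) ≠ 0 := by exact_mod_cast hp.ne_zero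
  rw [totientSqTerm, ← pow_mul, show (k + 1) * 2 = 2 * k + 1 + 1 by ring,
    Nat.totient_prime_pow_succ hp]
  push_cast [Nat.cast_sub hp.one_le]
  rw [div_pow, one_pow]
  field_simp
  ring

theorem tsum_totientSqTerm_prime_pow :
    ∑' e, totientSqTerm (p ^ e) = 1 + 1 / (p * (p + 1)) := by
  have hp1 : (1 : ℝ) < p := by exact_mod_cast hp.one_lt
  have hr : 1 / (p : ℝ) ^ 2 < 1 := by rw [div_lt_one (by positivity)]; nlinarith
  have hs : Summable fun e ↦ totientSqTerm (p ^ e) :=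
    (summable_norm_of_norm_le_one_div_sq norm_totientSqTerm_le).of_norm.comp_injective
      (Nat.pow_right_injective hp.two_le)
  rw [hs.tsum_eq_zero_add, tsum_congr (totientSqTerm_prime_pow_succ hp), tsum_mul_left,
    tsum_geometric_of_lt_one (by positivity) hr, pow_zero, totientSqTerm_one]
  have : (p : ℝ) ^ 2 - 1 ≠ 0 := by nlinarith
  field_simp
  ring

theorem tsum_moebiusSqPsiTerm_prime_pow :
    ∑' e, moebiusSqPsiTerm (p ^ e) = 1 + 1 / (p * (p + 1)) := by
  have hvanish : ∀ e ∉ range 2, moebiusSqPsiTerm (p ^ e) = 0 := fun e he ↦ by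
    rw [mem_range] at he
    rw [moebiusSqPsiTerm, ArithmeticFunction.moebius_apply_prime_pow hp (by omega),
      if_neg (by omega)]
    simp
  rw [tsum_eq_sum hvanish, sum_range_succ, sum_range_one, pow_zero, pow_one, moebiusSqPsiTerm_one,
    moebiusSqPsiTerm, ArithmeticFunction.moebius_apply_prime hp, dedekindPsi_prime hp]
  norm_num

end PrimePower

theorem totient_square_sum_eq :
    ∑' m : ℕ+, (Nat.totient ((m : ℕ) ^ 2) : ℝ) / (m : ℝ) ^ 4 =
      ∑' q : ℕ+, (ArithmeticFunction.moebius (q : ℕ) : ℝ) ^ 2 /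
        ((q : ℝ) * dedekindPsi (q : ℕ)) :=
  calc ∑' m : ℕ+, totientSqTerm m
      = ∑' n, totientSqTerm n := tsum_pnat_eq_tsum_of_eq_zero totientSqTerm_zero
    _ = ∑' n, moebiusSqPsiTerm n :=
      tsum_eq_tsum_of_eulerFactor_eq totientSqTerm_one moebiusSqPsiTerm_one
        totientSqTerm_mul_of_coprime moebiusSqPsiTerm_mul_of_coprime
        (summable_norm_of_norm_le_one_div_sq norm_totientSqTerm_le)
        (summable_norm_of_norm_le_one_div_sq norm_moebiusSqPsiTerm_le)
        totientSqTerm_zero moebiusSqPsiTerm_zero fun _ hp ↦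
          (tsum_totientSqTerm_prime_pow hp).trans (tsum_moebiusSqPsiTerm_prime_pow hp).symm
    _ = ∑' q : ℕ+, moebiusSqPsiTerm q :=
      (tsum_pnat_eq_tsum_of_eq_zero moebiusSqPsiTerm_zero).symm
end
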